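/- For n ≥ 0, the alternating sum ∑_{k=0}^{n} (-q)^k [n-k]_{q^2}! · [2]_q^{n-k} · Stir^B_q(n, n-k) equals 1, where Stir^B_q(n,k) are the type B q-Stirling numbers of the second kind. -/
import Mathlib


open Polynomial

/-- The `q`-integer `[k]_q = 1 + q + ⋯ + q^{k-1}`. -/
noncomputable def qint (k : ℕ) : Polynomial ℚ := ∑ i ∈ Finset.range k, X ^ i

/-- The `q`-factorial `[m]_q! = [1]_q [2]_q ⋯ [m]_q`. -/
noncomputable def qfact (m : ℕ) : Polynomial ℚ := ∏ i ∈ Finset.range m, qint (i + 1)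

/-- The type B `q`-Stirling numbers of the second kind, satisfying
`Stir^B_q(n,k) = Stir^B_q(n-1,k-1) + [2k+1]_q Stir^B_q(n-1,k)` with `Stir^B_q(0,k) = δ_{k,0}`. -/
noncomputable def qStirlingB : ℕ → ℕ → Polynomial ℚ
  | 0, k => if k = 0 then 1 else 0
  | n + 1, k => (if k = 0 then 0 else qStirlingB n (k - 1)) + qint (2 * k + 1) * qStirlingB n k

lemma qint_succ (m : ℕ) : qint (m + 1) = 1 + X * qint m := by
  unfold qint
  rw [Finset.sum_range_succ', Finset.mul_sum]
  simp [pow_succ, mul_comm, add_comm]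

lemma qint_comp_succ (m : ℕ) :
    (qint (m + 1)).comp (X ^ 2) = (qint m).comp (X ^ 2) + X ^ (2 * m) := by
  unfold qint
  rw [Finset.sum_range_succ, add_comp, pow_comp, X_comp, ← pow_mul]

lemma qint_two_mul (m : ℕ) : qint (2 * m) = qint 2 * (qint m).comp (X ^ 2) := by
  induction m with
  | zero => simp [qint]
  | succ m ih =>
      have h2 : qint 2 = 1 + X := by simp [qint, Finset.sum_range_succ]
      have hL : qint (2 * (m + 1)) = qint (2 * m) + X ^ (2 * m) + X ^ (2 * m + 1) := by
        have h : 2 * (m + 1) = (2 * m + 1) + 1 := by ring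
        rw [h]
        unfold qint
        rw [Finset.sum_range_succ, Finset.sum_range_succ]
      rw [hL, qint_comp_succ, mul_add, ← ih, h2]
      ring

lemma key (m : ℕ) : qint 2 * (qint (m + 1)).comp (X ^ 2) = 1 + X * qint (2 * m + 1) := by
  rw [← qint_two_mul]
  have h : 2 * (m + 1) = (2 * m + 1) + 1 := by ring
  rw [h, qint_succ]

lemma qStirlingB_eq_zero : ∀ n k, n < k → qStirlingB n k = 0 := by
  intro n
  induction n with
  | zero =>
      intro k hk
      have : k ≠ 0 := by omega
      simp [qStirlingB, this]
  | succ n ih =>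
      intro k hk
      have hk0 : k ≠ 0 := by omega
      simp only [qStirlingB, if_neg hk0]
      rw [ih (k - 1) (by omega), ih k (by omega)]
      ring

lemma aux (n : ℕ) :
    ∑ j ∈ Finset.range (n + 1),
      (-X) ^ (n - j) * (qfact j).comp (X ^ 2) * (qint 2) ^ j * qStirlingB n j = 1 := by
  induction n with
  | zero => simp [qfact, qStirlingB]
  | succ n ih =>
      have expand : ∀ j, qStirlingB (n + 1) j =
          (if j = 0 then 0 else qStirlingB n (j - 1)) + qint (2 * j + 1) * qStirlingB n j := by
        intro j; rfl
      have hA : (∑ j ∈ Finset.range (n + 2), (-X) ^ (n + 1 - j) * (qfact j).comp (X ^ 2) *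
              (qint 2) ^ j * (if j = 0 then 0 else qStirlingB n (j - 1)))
          = ∑ i ∈ Finset.range (n + 1), (-X) ^ (n - i) * (qfact (i + 1)).comp (X ^ 2) *
              (qint 2) ^ (i + 1) * qStirlingB n i := by
        rw [Finset.sum_range_succ']
        simp only [reduceIte, mul_zero, add_zero]
        refine Finset.sum_congr rfl fun i _ => ?_
        rw [if_neg (Nat.succ_ne_zero i)]
        simp only [Nat.succ_sub_succ, Nat.succ_sub_one, Nat.sub_zero]
      have hB : (∑ j ∈ Finset.range (n + 2), (-X) ^ (n + 1 - j) * (qfact j).comp (X ^ 2) *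
              (qint 2) ^ j * (qint (2 * j + 1) * qStirlingB n j))
          = ∑ j ∈ Finset.range (n + 1), (-X) ^ (n + 1 - j) * (qfact j).comp (X ^ 2) *
              (qint 2) ^ j * (qint (2 * j + 1) * qStirlingB n j) := by
        rw [Finset.sum_range_succ, qStirlingB_eq_zero n (n + 1) (by omega)]
        simp
      calc ∑ j ∈ Finset.range (n + 2),
            (-X) ^ (n + 1 - j) * (qfact j).comp (X ^ 2) * (qint 2) ^ j * qStirlingB (n + 1) j
          = (∑ j ∈ Finset.range (n + 2), (-X) ^ (n + 1 - j) * (qfact j).comp (X ^ 2) *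
              (qint 2) ^ j * (if j = 0 then 0 else qStirlingB n (j - 1)))
            + ∑ j ∈ Finset.range (n + 2), (-X) ^ (n + 1 - j) * (qfact j).comp (X ^ 2) *
              (qint 2) ^ j * (qint (2 * j + 1) * qStirlingB n j) := by
            rw [← Finset.sum_add_distrib]
            refine Finset.sum_congr rfl fun j _ => ?_
            rw [expand j]; ring
        _ = (∑ i ∈ Finset.range (n + 1), (-X) ^ (n - i) * (qfact (i + 1)).comp (X ^ 2) *
              (qint 2) ^ (i + 1) * qStirlingB n i)
            + ∑ j ∈ Finset.range (n + 1), (-X) ^ (n + 1 - j) * (qfact j).comp (X ^ 2) *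
              (qint 2) ^ j * (qint (2 * j + 1) * qStirlingB n j) := by
            rw [hA, hB]
        _ = ∑ i ∈ Finset.range (n + 1), (-X) ^ (n - i) * (qfact i).comp (X ^ 2) *
              (qint 2) ^ i * qStirlingB n i := by
            rw [← Finset.sum_add_distrib]
            refine Finset.sum_congr rfl fun i hi => ?_
            have hi' : i ≤ n := by simpa [Nat.lt_succ_iff] using hi
            have hpow : (-X : Polynomial ℚ) ^ (n + 1 - i) = (-X) * (-X) ^ (n - i) := by
              rw [← pow_succ']
              congr 1
              omega
            have hfact : (qfact (i + 1)).comp (X ^ 2) =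
                (qfact i).comp (X ^ 2) * (qint (i + 1)).comp (X ^ 2) := by
              unfold qfact
              rw [Finset.prod_range_succ, mul_comp]
            rw [hpow, hfact, pow_succ (qint 2) i]
            have hk := key i
            set F := (qfact i).comp (X ^ 2) with hF
            set G := (qint (i + 1)).comp (X ^ 2) with hG
            linear_combination ((-X) ^ (n - i) * F * (qint 2) ^ i * qStirlingB n i) * hk
        _ = 1 := ih

theorem qStirlingB_alternating_sum (n : ℕ) :
    ∑ k ∈ Finset.range (n + 1),
      (-X) ^ k * (qfact (n - k)).comp (X ^ 2) * (qint 2) ^ (n - k) * qStirlingB n (n - k) = 1 := by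
  rw [← aux n]
  conv_rhs => rw [← Finset.sum_range_reflect]
  refine Finset.sum_congr rfl fun k hk => ?_
  have hk' : k ≤ n := by simpa [Nat.lt_succ_iff] using hk
  simp only [Nat.add_sub_cancel]
  rw [Nat.sub_sub_self hk']
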